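/- arXiv:1708.06846 — 10 statements merged into one kernel-verified Lean document; each statement's English description precedes it below -/
import Mathlib

section
/- In a decomposable and smooth arithmetic circuit AC(X), for every full instantiation x of the variables X, AC(x) equals the sum of the coefficients of all x-subcircuits (complete subcircuits whose term is x). -/
/-- An arithmetic circuit over variables `ι` with values `α`: leaves are indicator
variables `λ_{i,v}` or real parameters; internal nodes are sums or products. -/
inductive AC (ι α : Type) : Type where
  | ind (i : ι) (v : α)
  | param (θ : ℝ)
  | sum (l r : AC ι α)
  | prod (l r : AC ι α)

namespace AC

variable {ι α : Type} [Fintype ι] [DecidableEq ι] [Fintype α] [DecidableEq α]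

/-- Evaluate the circuit under a circuit input `Λ` assigning 0/1 to each indicator. -/
def eval (Λ : ι → α → Bool) : AC ι α → ℝ
  | ind i v => if Λ i v then 1 else 0
  | param θ => θ
  | sum l r => l.eval Λ + r.eval Λ
  | prod l r => l.eval Λ * r.eval Λ

/-- Evaluate the maximizer circuit (sum nodes replaced by max nodes). -/
def evalMax (Λ : ι → α → Bool) : AC ι α → ℝ
  | ind i v => if Λ i v then 1 else 0
  | param θ => θ
  | sum l r => max (l.evalMax Λ) (r.evalMax Λ)
  | prod l r => l.evalMax Λ * r.evalMax Λ

/-- The circuit input corresponding to a full instantiation `x`. -/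
def inputOf (x : ι → α) : ι → α → Bool := fun i v => decide (x i = v)

/-- The circuit input corresponding to a partial instantiation `y`:
an indicator is set to 1 iff its value is compatible with `y`. -/
def pinputOf (y : ι → Option α) : ι → α → Bool := fun i v =>
  match y i with
  | none => true
  | some w => decide (w = v)

/-- The value `AC(x)` of the circuit at a full instantiation `x`. -/
def evalAt (x : ι → α) (c : AC ι α) : ℝ := c.eval (inputOf x)

/-- The value `AC(y)` of the circuit at a partial instantiation `y`. -/
def evalP (y : ι → Option α) (c : AC ι α) : ℝ := c.eval (pinputOf y)

/-- Maximizer-circuit value at a full instantiation. -/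
def evalMaxAt (x : ι → α) (c : AC ι α) : ℝ := c.evalMax (inputOf x)

/-- Maximizer-circuit value at a partial instantiation. -/
def evalMaxP (y : ι → Option α) (c : AC ι α) : ℝ := c.evalMax (pinputOf y)

/-- `vars n`: variables with some indicator at or under the node. -/
def vars : AC ι α → Finset ι
  | ind i _ => {i}
  | param _ => ∅
  | sum l r => l.vars ∪ r.vars
  | prod l r => l.vars ∪ r.vars

/-- The multiset of parameters appearing in the circuit. -/
def params : AC ι α → Multiset ℝ
  | ind _ _ => 0
  | param θ => {θ}
  | sum l r => l.params + r.params
  | prod l r => l.params + r.params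

/-- Decomposability: children of every `*`-node have disjoint variable sets. -/
def Decomposable : AC ι α → Prop
  | ind _ _ => True
  | param _ => True
  | sum l r => l.Decomposable ∧ r.Decomposable
  | prod l r => Disjoint l.vars r.vars ∧ l.Decomposable ∧ r.Decomposable

/-- Smoothness: every child of a `+`-node mentions the same variables as the node. -/
def Smooth : AC ι α → Prop
  | ind _ _ => True
  | param _ => True
  | sum l r => l.vars = r.vars ∧ l.Smooth ∧ r.Smooth
  | prod l r => l.Smooth ∧ r.Smooth

/-- Determinism: under every full instantiation, every `+`-node has at most one
non-zero input. -/
def Deterministic : AC ι α → Prop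
  | ind _ _ => True
  | param _ => True
  | sum l r => (∀ x : ι → α, l.evalAt x = 0 ∨ r.evalAt x = 0) ∧
      l.Deterministic ∧ r.Deterministic
  | prod l r => l.Deterministic ∧ r.Deterministic

/-- A full instantiation `x` is compatible with a partial instantiation `y`. -/
def Compat (x : ι → α) (y : ι → Option α) : Prop :=
  ∀ i, y i = none ∨ y i = some (x i)

instance (x : ι → α) (y : ι → Option α) : Decidable (Compat x y) := by
  unfold Compat; infer_instance

/-- The graph of a full instantiation, i.e. its term `{(i, x i) | i}`. -/
def graphOf (x : ι → α) : Finset (ι × α) := Finset.univ.image fun i => (i, x i)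

/-- The marginal `Σ_{x ∼ y} f(x)` of a factor `f` at a partial instantiation `y`. -/
def margSum (f : (ι → α) → ℝ) (y : ι → Option α) : ℝ :=
  ∑ x : ι → α, if Compat x y then f x else 0

/-- The circuit computes the factor `f`. -/
def Computes (c : AC ι α) (f : (ι → α) → ℝ) : Prop := ∀ x, c.evalAt x = f x

/-- The circuit computes the marginals of the factor `f`. -/
def ComputesMarginals (c : AC ι α) (f : (ι → α) → ℝ) : Prop :=
  ∀ y : ι → Option α, c.evalP y = margSum f y

/-- The multiset of (term, coefficient) pairs of all complete subcircuits. -/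
def subs : AC ι α → Multiset (Finset (ι × α) × ℝ)
  | ind i v => {({(i, v)}, 1)}
  | param θ => {(∅, θ)}
  | sum l r => l.subs + r.subs
  | prod l r => l.subs.bind fun a => r.subs.map fun b => (a.1 ∪ b.1, a.2 * b.2)

/-- Complete subcircuits of a circuit: choose one child of each `+`-node and all
children of each `*`-node. -/
inductive Sub : AC ι α → Type where
  | ind (i : ι) (v : α) : Sub (AC.ind i v)
  | param (θ : ℝ) : Sub (AC.param θ)
  | sumL {l r : AC ι α} : Sub l → Sub (AC.sum l r)
  | sumR {l r : AC ι α} : Sub r → Sub (AC.sum l r)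
  | prod {l r : AC ι α} : Sub l → Sub r → Sub (AC.prod l r)

/-- The term of a complete subcircuit: the set of indicator values appearing in it. -/
def Sub.term : {c : AC ι α} → Sub c → Finset (ι × α)
  | _, .ind i v => {(i, v)}
  | _, .param _ => ∅
  | _, .sumL s => s.term
  | _, .sumR s => s.term
  | _, .prod s t => s.term ∪ t.term

/-- The coefficient of a complete subcircuit: the product of its parameters. -/
def Sub.coeff : {c : AC ι α} → Sub c → ℝ
  | _, .ind _ _ => 1
  | _, .param θ => θ
  | _, .sumL s => s.coeff
  | _, .sumR s => s.coeff
  | _, .prod s t => s.coeff * t.coeff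


end AC

/-!
Inductively, `AC(x)` is the sum of the coefficients of the complete subcircuits whose term is the
graph of `x` on the variables of the node. At a `+`-node smoothness gives both children the
variables of the node, so the two sums add up. At a `*`-node the term of a subcircuit is the union
of terms of the children, each mentioning only the variables of its child; by decomposability these
variable sets are disjoint, so the union is the graph of `x` iff each part is the graph of `x` on
its child's variables, and the coefficient sum factors as the product of the children's sums.
-/

theorem sup_eq_sup_iff_of_disjoint {L : Type*} [DistribLattice L] [OrderBot L]
    {a b a' b' u v : L} (huv : Disjoint u v) (ha : a ≤ u) (ha' : a' ≤ u) (hb : b ≤ v)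
    (hb' : b' ≤ v) : a ⊔ b = a' ⊔ b' ↔ a = a' ∧ b = b' := by
  have inf_left {c d : L} (hc : c ≤ u) (hd : d ≤ v) : (c ⊔ d) ⊓ u = c := by
    rw [inf_sup_right, inf_eq_left.2 hc, (huv.symm.mono_left hd).eq_bot, sup_bot_eq]
  have inf_right {c d : L} (hc : c ≤ u) (hd : d ≤ v) : (c ⊔ d) ⊓ v = d := by
    rw [inf_sup_right, (huv.mono_left hc).eq_bot, inf_eq_left.2 hd, bot_sup_eq]
  constructor
  · intro h
    exact ⟨by rw [← inf_left ha hb, h, inf_left ha' hb'],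
      by rw [← inf_right ha hb, h, inf_right ha' hb']⟩
  · rintro ⟨rfl, rfl⟩
    rfl

namespace AC

variable {ι α : Type} [DecidableEq ι] [DecidableEq α]

def graphOn (s : Finset ι) (x : ι → α) : Finset (ι × α) := s.image fun i => (i, x i)

theorem coe_graphOn_subset_preimage (s : Finset ι) (x : ι → α) :
    (graphOn s x : Set (ι × α)) ⊆ Prod.fst ⁻¹' s := by
  simp [graphOn, Set.image_subset_iff, Set.preimage_preimage]

theorem graphOn_union (s s' : Finset ι) (x : ι → α) :
    graphOn (s ∪ s') x = graphOn s x ∪ graphOn s' x :=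
  Finset.image_union _ _

theorem graphOn_univ [Fintype ι] (x : ι → α) : graphOn Finset.univ x = graphOf x := rfl

def coeffSum (c : AC ι α) (t : Finset (ι × α)) : ℝ :=
  (c.subs.map fun p => if p.1 = t then p.2 else 0).sum

theorem coe_subset_preimage_vars_of_mem_subs {c : AC ι α} {p : Finset (ι × α) × ℝ}
    (hp : p ∈ c.subs) : (p.1 : Set (ι × α)) ⊆ Prod.fst ⁻¹' c.vars := by
  induction c generalizing p with
  | ind i v =>
    obtain rfl := Multiset.mem_singleton.1 hp
    simp [vars]
  | param θ =>
    obtain rfl := Multiset.mem_singleton.1 hp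
    simp
  | sum l r ihl ihr =>
    rcases Multiset.mem_add.1 hp with hp | hp
    · exact (ihl hp).trans fun q hq => Finset.mem_union_left _ hq
    · exact (ihr hp).trans fun q hq => Finset.mem_union_right _ hq
  | prod l r ihl ihr =>
    simp only [subs, Multiset.mem_bind, Multiset.mem_map] at hp
    obtain ⟨a, ha, b, hb, rfl⟩ := hp
    rw [Finset.coe_union]
    exact Set.union_subset_union (ihl ha) (ihr hb) |>.trans (by simp [vars, Set.preimage_union])

theorem coeffSum_sum (l r : AC ι α) (t : Finset (ι × α)) :
    (sum l r).coeffSum t = l.coeffSum t + r.coeffSum t := by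
  simp only [coeffSum, subs, Multiset.map_add, Multiset.sum_add]

theorem coeffSum_prod {l r : AC ι α} (hlr : Disjoint l.vars r.vars) {t u : Finset (ι × α)}
    (ht : (t : Set (ι × α)) ⊆ Prod.fst ⁻¹' l.vars) (hu : (u : Set (ι × α)) ⊆ Prod.fst ⁻¹' r.vars) :
    (prod l r).coeffSum (t ∪ u) = l.coeffSum t * r.coeffSum u := by
  have hdisj : Disjoint (Prod.fst ⁻¹' (l.vars : Set ι) : Set (ι × α)) (Prod.fst ⁻¹' r.vars) :=
    (Finset.disjoint_coe.2 hlr).preimage Prod.fst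
  have term_eq {a b : Finset (ι × α) × ℝ} (ha : a ∈ l.subs) (hb : b ∈ r.subs) :
      a.1 ∪ b.1 = t ∪ u ↔ a.1 = t ∧ b.1 = u := by
    simp only [← Finset.coe_inj, Finset.coe_union]
    exact sup_eq_sup_iff_of_disjoint hdisj (coe_subset_preimage_vars_of_mem_subs ha) ht
      (coe_subset_preimage_vars_of_mem_subs hb) hu
  simp only [coeffSum, subs, Multiset.map_bind, Multiset.sum_bind, Multiset.map_map]
  rw [← Multiset.sum_map_mul_right]
  refine congrArg Multiset.sum (Multiset.map_congr rfl fun a ha => ?_)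
  rw [← Multiset.sum_map_mul_left]
  refine congrArg Multiset.sum (Multiset.map_congr rfl fun b hb => ?_)
  simp only [Function.comp, ite_zero_mul_ite_zero, if_congr (term_eq ha hb) rfl rfl]

theorem evalAt_eq_coeffSum_graphOn (x : ι → α) {c : AC ι α} (hd : c.Decomposable)
    (hs : c.Smooth) : c.evalAt x = c.coeffSum (graphOn c.vars x) := by
  induction c with
  | ind i v =>
    by_cases h : x i = v
    · subst h
      simp [evalAt, eval, inputOf, coeffSum, subs, vars, graphOn]
    · simp [evalAt, eval, inputOf, coeffSum, subs, vars, graphOn, h, Ne.symm h]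
  | param θ => simp [evalAt, eval, coeffSum, subs, vars, graphOn]
  | sum l r ihl ihr =>
    obtain ⟨hdl, hdr⟩ := hd
    obtain ⟨hlr, hsl, hsr⟩ := hs
    have hvars : (sum l r).vars = l.vars := by simp [vars, hlr]
    rw [hvars, coeffSum_sum, ← ihl hdl hsl, hlr, ← ihr hdr hsr]
    rfl
  | prod l r ihl ihr =>
    obtain ⟨hlr, hdl, hdr⟩ := hd
    obtain ⟨hsl, hsr⟩ := hs
    rw [show (prod l r).vars = l.vars ∪ r.vars from rfl, graphOn_union,
      coeffSum_prod hlr (coe_graphOn_subset_preimage _ _) (coe_graphOn_subset_preimage _ _),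
      ← ihl hdl hsl, ← ihr hdr hsr]
    rfl

end AC

theorem stmt2_general {ι α : Type} [Fintype ι] [DecidableEq ι] [DecidableEq α]
    (c : AC ι α) (hd : c.Decomposable) (hs : c.Smooth) (hv : c.vars = Finset.univ)
    (x : ι → α) :
    c.evalAt x = (c.subs.map fun p => if p.1 = AC.graphOf x then p.2 else 0).sum := by
  rw [AC.evalAt_eq_coeffSum_graphOn x hd hs, hv, AC.graphOn_univ]
  rfl

/-- In a decomposable and smooth circuit `AC(X)`, the value at any full
instantiation `x` equals the sum of the coefficients of all `x`-subcircuits. -/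
theorem stmt2 {ι α : Type} [Fintype ι] [DecidableEq ι] [Fintype α] [DecidableEq α]
    (c : AC ι α) (hd : c.Decomposable) (hs : c.Smooth) (hv : c.vars = Finset.univ)
    (x : ι → α) :
    c.evalAt x = (c.subs.map fun p => if p.1 = AC.graphOf x then p.2 else 0).sum :=
  stmt2_general c hd hs hv x
end

section
/- If a decomposable and smooth arithmetic circuit AC(X) computes a factor f(X) (i.e., AC(x) = f(x) for all full instantiations x), then AC computes the marginals of f: for every subset Y of X and every instantiation y of Y, AC(y) = Σ_z f(y,z), where z ranges over instantiations of X \ Y. -/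
section PiBox

variable {ι α R : Type*} [Fintype ι] [DecidableEq ι] [CommSemiring R]

def piBox (A : ι → Finset α) (x₀ : ι → α) (S : Finset ι) : Finset (ι → α) :=
  Fintype.piFinset (S.piecewise A fun i => {x₀ i})

lemma mem_piBox {A : ι → Finset α} {x₀ x : ι → α} {S : Finset ι} :
    x ∈ piBox A x₀ S ↔ (∀ i ∈ S, x i ∈ A i) ∧ ∀ i ∉ S, x i = x₀ i := by
  simp only [piBox, Fintype.mem_piFinset, Finset.piecewise]
  refine ⟨fun h => ⟨fun i hi => ?_, fun i hi => ?_⟩, fun h i => ?_⟩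
  · simpa [hi] using h i
  · simpa [hi] using h i
  · by_cases hi : i ∈ S <;> simp [hi, h.1, h.2]

lemma piBox_empty (A : ι → Finset α) (x₀ : ι → α) : piBox A x₀ ∅ = {x₀} := by
  rw [piBox, Finset.piecewise_empty, Fintype.piFinset_singleton]

lemma sum_piBox_singleton (A : ι → Finset α) (x₀ : ι → α) (i : ι) (g : α → R) :
    ∑ x ∈ piBox A x₀ {i}, g (x i) = ∑ v ∈ A i, g v := by
  refine Finset.sum_nbij' (fun x => x i) (Function.update x₀ i) ?_ ?_ ?_ ?_ fun _ _ => rfl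
  · intro x hx
    simpa using (mem_piBox.mp hx).1 i (Finset.mem_singleton_self i)
  · intro v hv
    rw [mem_piBox]
    exact ⟨by simpa using hv, fun j hj => Function.update_of_ne (by simpa using hj) _ _⟩
  · intro x hx
    ext j
    by_cases hj : j = i
    · subst hj; simp
    · simp [hj, (mem_piBox.mp hx).2 j (by simpa using hj)]
  · intro v _
    simp

section Union

variable {A : ι → Finset α} {x₀ : ι → α} {S T : Finset ι}

lemma piecewise_mem_piBox_union (hST : Disjoint S T) {a b : ι → α} (ha : a ∈ piBox A x₀ S)
    (hb : b ∈ piBox A x₀ T) : S.piecewise a b ∈ piBox A x₀ (S ∪ T) := by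
  rw [mem_piBox] at ha hb ⊢
  refine ⟨fun i hi => ?_, fun i hi => ?_⟩
  · rcases Finset.mem_union.mp hi with hS | hT
    · simpa [hS] using ha.1 i hS
    · simpa [Finset.disjoint_right.mp hST hT] using hb.1 i hT
  · simp only [Finset.mem_union, not_or] at hi
    simpa [hi.1] using hb.2 i hi.2

lemma piecewise_mem_piBox_left {x : ι → α} (hx : x ∈ piBox A x₀ (S ∪ T)) :
    S.piecewise x x₀ ∈ piBox A x₀ S := by
  rw [mem_piBox] at hx ⊢
  exact ⟨fun i hi => by simpa [hi] using hx.1 i (Finset.mem_union_left _ hi),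
    fun i hi => by simp [hi]⟩

lemma piecewise_mem_piBox_right (hST : Disjoint S T) {x : ι → α}
    (hx : x ∈ piBox A x₀ (S ∪ T)) : S.piecewise x₀ x ∈ piBox A x₀ T := by
  rw [mem_piBox] at hx ⊢
  refine ⟨fun i hi => ?_, fun i hi => ?_⟩
  · simpa [Finset.disjoint_right.mp hST hi] using hx.1 i (Finset.mem_union_right _ hi)
  · by_cases hS : i ∈ S
    · simp [hS]
    · simpa [hS] using hx.2 i (by simp [hS, hi])

lemma sum_piBox_union_mul (hST : Disjoint S T) {g h : (ι → α) → R} (hg : DependsOn g S)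
    (hh : DependsOn h T) :
    ∑ x ∈ piBox A x₀ (S ∪ T), g x * h x =
      (∑ x ∈ piBox A x₀ S, g x) * ∑ x ∈ piBox A x₀ T, h x := by
  rw [Finset.sum_mul_sum, ← Finset.sum_product']
  refine Finset.sum_nbij' (fun x => (S.piecewise x x₀, S.piecewise x₀ x))
    (fun p => S.piecewise p.1 p.2) (fun x hx => ?_) (fun p hp => ?_) (fun x _ => ?_)
    (fun p hp => ?_) (fun x _ => ?_)
  · exact Finset.mem_product.mpr
      ⟨piecewise_mem_piBox_left hx, piecewise_mem_piBox_right hST hx⟩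
  · obtain ⟨ha, hb⟩ := Finset.mem_product.mp hp
    exact piecewise_mem_piBox_union hST ha hb
  · ext i
    by_cases hi : i ∈ S <;> simp [hi]
  · obtain ⟨ha, hb⟩ := Finset.mem_product.mp hp
    ext i
    · by_cases hi : i ∈ S <;> simp [hi, (mem_piBox.mp ha).2]
    · by_cases hi : i ∈ S
      · simp [hi, (mem_piBox.mp hb).2 i (Finset.disjoint_left.mp hST hi)]
      · simp [hi]
  · rw [hg fun i hi => (Finset.piecewise_eq_of_mem _ _ _ hi).symm,
      hh fun i hi => (Finset.piecewise_eq_of_notMem _ _ _ (Finset.disjoint_right.mp hST hi)).symm]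

end Union

end PiBox

namespace AC

variable {ι α : Type}

lemma nonempty_of_mem_vars [DecidableEq ι] {c : AC ι α} {i : ι} (hi : i ∈ c.vars) :
    Nonempty α := by
  induction c with
  | ind _ v => exact ⟨v⟩
  | param θ => simp [vars] at hi
  | sum l r ihl ihr | prod l r ihl ihr =>
    exact (Finset.mem_union.mp hi).elim ihl ihr

lemma pinputOf_eq_true_iff [DecidableEq α] {y : ι → Option α} {i : ι} {v : α} :
    pinputOf y i v = true ↔ y i = none ∨ y i = some v := by
  unfold pinputOf
  split <;> simp_all

variable [DecidableEq ι] [DecidableEq α]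

lemma dependsOn_evalAt (c : AC ι α) : DependsOn (evalAt · c) c.vars := by
  intro x x' h
  induction c with
  | ind i v => simp [evalAt, eval, inputOf, h i (by simp [vars])]
  | param θ => rfl
  | sum l r ihl ihr =>
    exact congrArg₂ (· + ·) (ihl fun i hi => h i (by simp [vars, hi]))
      (ihr fun i hi => h i (by simp [vars, hi]))
  | prod l r ihl ihr =>
    exact congrArg₂ (· * ·) (ihl fun i hi => h i (by simp [vars, hi]))
      (ihr fun i hi => h i (by simp [vars, hi]))

variable [Fintype ι] [Fintype α]

lemma piBox_pinputOf_univ (y : ι → Option α) (x₀ : ι → α) :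
    piBox (fun i => {v | pinputOf y i v}) x₀ Finset.univ = Finset.univ.filter (Compat · y) := by
  ext x
  rw [mem_piBox, Finset.mem_filter]
  simp [Compat, pinputOf_eq_true_iff]

theorem eval_eq_sum_piBox (Λ : ι → α → Bool) (x₀ : ι → α) {c : AC ι α}
    (hd : c.Decomposable) (hs : c.Smooth) :
    c.eval Λ = ∑ x ∈ piBox (fun i => {v | Λ i v}) x₀ c.vars, c.evalAt x := by
  induction c with
  | ind i v =>
    rw [show (ind i v : AC ι α).vars = {i} from rfl]
    have hsum := sum_piBox_singleton (fun i => {v | Λ i v}) x₀ i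
      fun w => if w = v then (1 : ℝ) else 0
    simpa [evalAt, eval, inputOf] using hsum.symm
  | param θ =>
    rw [show (param θ : AC ι α).vars = ∅ from rfl, piBox_empty, Finset.sum_singleton]
    rfl
  | sum l r ihl ihr =>
    rw [eval, ihl hd.1 hs.2.1, ihr hd.2 hs.2.2, vars, ← hs.1, Finset.union_self,
      ← Finset.sum_add_distrib]
    rfl
  | prod l r ihl ihr =>
    rw [eval, ihl hd.2.1 hs.1, ihr hd.2.2 hs.2, vars,
      ← sum_piBox_union_mul hd.1 l.dependsOn_evalAt r.dependsOn_evalAt]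
    rfl

end AC

theorem stmt3_general {ι α : Type} [Fintype ι] [DecidableEq ι] [Fintype α] [DecidableEq α]
    (c : AC ι α) (hd : c.Decomposable) (hs : c.Smooth) (hv : c.vars = Finset.univ)
    (f : (ι → α) → ℝ) (hc : c.Computes f) :
    c.ComputesMarginals f := by
  intro y
  obtain ⟨x₀⟩ : Nonempty (ι → α) :=
    ⟨fun i => (AC.nonempty_of_mem_vars (hv ▸ Finset.mem_univ i)).some⟩
  rw [AC.evalP, AC.eval_eq_sum_piBox _ x₀ hd hs, hv, AC.piBox_pinputOf_univ, AC.margSum,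
    ← Finset.sum_filter]
  exact Finset.sum_congr rfl fun x _ => hc x

/-- If a decomposable and smooth circuit computes a factor, then it computes the
factor's marginals: at every partial instantiation `y`, its value is `Σ_{x ∼ y} f(x)`. -/
theorem stmt3 {ι α : Type} [Fintype ι] [DecidableEq ι] [Fintype α] [DecidableEq α]
    (c : AC ι α) (hd : c.Decomposable) (hs : c.Smooth) (hv : c.vars = Finset.univ)
    (f : (ι → α) → ℝ) (hf : ∀ x, 0 ≤ f x) (hc : c.Computes f) :
    c.ComputesMarginals f :=
  stmt3_general c hd hs hv f hc
end

section
/- There exists a decomposable arithmetic circuit that computes a factor f but does not compute the marginals of f. Concretely, the circuit λ_aλ_b + λ_{¬a} over binary variables A, B is decomposable, computes the factor f with f(a,b)=1, f(a,¬b)=0, f(¬a,b)=1, f(¬a,¬b)=1, but its value at partial instantiation ¬a is 1 while the marginal f(¬a) = f(¬a,b)+f(¬a,¬b) = 2. -/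
/-- The concrete circuit `λ_a λ_b + λ_{¬a}` over binary variables `A = 0`, `B = 1`
(value `true` standing for `a`, `b`). -/
def C4 : AC (Fin 2) Bool := .sum (.prod (.ind 0 true) (.ind 1 true)) (.ind 0 false)

/-- The factor with f(a,b)=1, f(a,¬b)=0, f(¬a,b)=1, f(¬a,¬b)=1. -/
def f4 : (Fin 2 → Bool) → ℝ := fun x => if x 0 = true ∧ x 1 = false then 0 else 1

/-- The partial instantiation `¬a` (variable `B` unassigned). -/
def y4 : Fin 2 → Option Bool := fun i => if i = 0 then some false else none

/-! On the partial instantiation `¬a` both indicators of `B` are set to 1 and `λ_a` to 0, so the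
circuit evaluates to `λ_{¬a} = 1`. The marginal, however, adds up the two completions
`(¬a, b)` and `(¬a, ¬b)`, each of weight 1. The summand `λ_{¬a}` does not mention `B`
(the circuit is not smooth), so nothing in the circuit accounts for the two values of `B`. -/

theorem AC.not_computesMarginals_of_evalP_ne {ι α : Type} [Fintype ι] [DecidableEq ι]
    [Fintype α] [DecidableEq α] {c : AC ι α} {f : (ι → α) → ℝ} {y : ι → Option α}
    (h : c.evalP y ≠ AC.margSum f y) : ¬ c.ComputesMarginals f :=
  fun hc => h (hc y)

theorem C4_decomposable : C4.Decomposable :=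
  ⟨⟨by simp [AC.vars], trivial, trivial⟩, trivial⟩

theorem C4_computes_f4 : C4.Computes f4 := by
  intro x
  simp only [C4, f4, AC.evalAt, AC.eval, AC.inputOf]
  rcases Bool.eq_false_or_eq_true (x 0) with h0 | h0 <;>
    rcases Bool.eq_false_or_eq_true (x 1) with h1 | h1 <;> simp [h0, h1]

theorem C4_evalP_y4 : C4.evalP y4 = 1 := by
  simp [C4, AC.evalP, AC.eval, AC.pinputOf, y4]

theorem margSum_f4_y4 : AC.margSum f4 y4 = 2 := by
  rw [AC.margSum, ← (finTwoArrowEquiv Bool).symm.sum_comp, Fintype.sum_prod_type]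
  simp [AC.Compat, Fin.forall_fin_two, y4, f4, one_add_one_eq_two]

/-- A decomposable circuit that computes a factor but not its marginals: it is
decomposable and computes `f4`, yet its value at partial instantiation `¬a` is `1`
while the marginal `f(¬a) = f(¬a,b) + f(¬a,¬b) = 2`; hence it does not compute the
marginals of `f4`. -/
theorem stmt4 :
    C4.Decomposable ∧ C4.Computes f4 ∧ C4.evalP y4 = 1 ∧ AC.margSum f4 y4 = 2 ∧
      ¬ C4.ComputesMarginals f4 :=
  ⟨C4_decomposable, C4_computes_f4, C4_evalP_y4, margSum_f4_y4,
    AC.not_computesMarginals_of_evalP_ne (by rw [C4_evalP_y4, margSum_f4_y4]; norm_num)⟩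
end

section
/- Let AC(X) be a deterministic, decomposable, and smooth arithmetic circuit that computes a factor f(X). For every full instantiation x with f(x) > 0, the circuit contains a unique x-subcircuit with non-zero coefficient, and its coefficient equals f(x). -/
/-!
Induction on the circuit. Call a complete subcircuit consistent with `x` if all its
indicators `λ_{i,v}` have `v = x i`. In a deterministic circuit at most one consistent
subcircuit has non-zero coefficient, and that coefficient is `AC(x)`: at a `+`-node,
determinism forces the child not chosen by the subcircuit to vanish at `x`. Smoothness
makes the term of every complete subcircuit mention exactly the variables of the root,
so when the root mentions all variables a consistent term is the whole graph of `x`.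
-/

namespace AC

variable {ι α : Type} [DecidableEq α]

theorem evalAt_sum (x : ι → α) (l r : AC ι α) : (sum l r).evalAt x = l.evalAt x + r.evalAt x :=
  rfl

theorem evalAt_prod (x : ι → α) (l r : AC ι α) : (prod l r).evalAt x = l.evalAt x * r.evalAt x :=
  rfl

variable [DecidableEq ι]

theorem Sub.term_image_fst {c : AC ι α} (hs : c.Smooth) (s : Sub c) :
    s.term.image Prod.fst = c.vars := by
  induction s with
  | ind i v => simp [Sub.term, vars]
  | param θ => simp [Sub.term, vars]
  | sumL s ih => simp only [Sub.term, vars, ih hs.2.1, hs.1, Finset.union_self]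
  | sumR s ih => simp only [Sub.term, vars, ih hs.2.2, hs.1, Finset.union_self]
  | prod s t ihs iht => simp [Sub.term, vars, Finset.image_union, ihs hs.1, iht hs.2]

variable [Fintype ι]

@[simp]
theorem mk_mem_graphOf {x : ι → α} {i : ι} {v : α} : (i, v) ∈ graphOf x ↔ x i = v := by
  simp [graphOf]

theorem Sub.term_eq_graphOf {c : AC ι α} (hs : c.Smooth) (hv : c.vars = Finset.univ)
    {x : ι → α} {s : Sub c} (hsx : s.term ⊆ graphOf x) : s.term = graphOf x := by
  refine hsx.antisymm fun p hp => ?_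
  obtain ⟨i, -, rfl⟩ := Finset.mem_image.1 hp
  have hi : i ∈ s.term.image Prod.fst := s.term_image_fst hs ▸ hv ▸ Finset.mem_univ i
  obtain ⟨⟨j, v⟩, hq, rfl⟩ := Finset.mem_image.1 hi
  rwa [mk_mem_graphOf.1 (hsx hq)]

theorem Sub.coeff_eq_evalAt {c : AC ι α} (hdet : c.Deterministic) {x : ι → α} {t : Sub c}
    (htx : t.term ⊆ graphOf x) (ht : t.coeff ≠ 0) : t.coeff = c.evalAt x := by
  induction t with
  | ind i v =>
    simp only [Sub.term, Finset.singleton_subset_iff, mk_mem_graphOf] at htx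
    simp [Sub.coeff, evalAt, eval, inputOf, htx]
  | param θ => rfl
  | @sumL l r s ih =>
    have hs := ih hdet.2.1 htx ht
    have hr : r.evalAt x = 0 := (hdet.1 x).resolve_left fun h => ht (hs.trans h)
    rw [evalAt_sum, hr, add_zero]
    exact hs
  | @sumR l r s ih =>
    have hs := ih hdet.2.2 htx ht
    have hl : l.evalAt x = 0 := (hdet.1 x).resolve_right fun h => ht (hs.trans h)
    rw [evalAt_sum, hl, zero_add]
    exact hs
  | prod s t ihs iht =>
    rw [Sub.term, Finset.union_subset_iff] at htx
    rw [Sub.coeff, mul_ne_zero_iff] at ht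
    rw [Sub.coeff, evalAt_prod, ihs hdet.1 htx.1 ht.1, iht hdet.2 htx.2 ht.2]

theorem Sub.eq_of_term_subset_graphOf {c : AC ι α} (hdet : c.Deterministic) {x : ι → α}
    {t t' : Sub c} (htx : t.term ⊆ graphOf x) (ht : t.coeff ≠ 0)
    (htx' : t'.term ⊆ graphOf x) (ht' : t'.coeff ≠ 0) : t = t' := by
  induction t with
  | ind i v => cases t'; rfl
  | param θ => cases t'; rfl
  | sumL s ih =>
    cases t' with
    | sumL s' => rw [ih hdet.2.1 htx ht htx' ht']
    | sumR s' =>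
      exfalso
      rcases hdet.1 x with h | h
      · exact ht ((coeff_eq_evalAt hdet.2.1 htx ht).trans h)
      · exact ht' ((coeff_eq_evalAt hdet.2.2 htx' ht').trans h)
  | sumR s ih =>
    cases t' with
    | sumL s' =>
      exfalso
      rcases hdet.1 x with h | h
      · exact ht' ((coeff_eq_evalAt hdet.2.1 htx' ht').trans h)
      · exact ht ((coeff_eq_evalAt hdet.2.2 htx ht).trans h)
    | sumR s' => rw [ih hdet.2.2 htx ht htx' ht']
  | prod s t ihs iht =>
    cases t' with
    | prod s' t' =>
      rw [Sub.term, Finset.union_subset_iff] at htx htx'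
      rw [Sub.coeff, mul_ne_zero_iff] at ht ht'
      rw [ihs hdet.1 htx.1 ht.1 htx'.1 ht'.1, iht hdet.2 htx.2 ht.2 htx'.2 ht'.2]

theorem exists_sub_term_subset_coeff_eq_evalAt {c : AC ι α} (hdet : c.Deterministic)
    {x : ι → α} (hx : c.evalAt x ≠ 0) :
    ∃ s : Sub c, s.term ⊆ graphOf x ∧ s.coeff = c.evalAt x := by
  induction c with
  | ind i v =>
    have hv : x i = v := by simpa [evalAt, eval, inputOf] using hx
    exact ⟨.ind i v, by simp [Sub.term, hv], by simp [Sub.coeff, evalAt, eval, inputOf, hv]⟩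
  | param θ => exact ⟨.param θ, by simp [Sub.term], rfl⟩
  | sum l r ihl ihr =>
    rw [evalAt_sum] at hx ⊢
    rcases hdet.1 x with h | h
    · rw [h, zero_add] at hx ⊢
      obtain ⟨s, hsx, hs⟩ := ihr hdet.2.2 hx
      exact ⟨.sumR s, hsx, hs⟩
    · rw [h, add_zero] at hx ⊢
      obtain ⟨s, hsx, hs⟩ := ihl hdet.2.1 hx
      exact ⟨.sumL s, hsx, hs⟩
  | prod l r ihl ihr =>
    rw [evalAt_prod] at hx ⊢
    obtain ⟨hl, hr⟩ := mul_ne_zero_iff.1 hx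
    obtain ⟨s, hsx, hs⟩ := ihl hdet.1 hl
    obtain ⟨t, htx, ht⟩ := ihr hdet.2 hr
    exact ⟨.prod s t, Finset.union_subset hsx htx, congrArg₂ (· * ·) hs ht⟩

end AC

theorem stmt6_general {ι α : Type} [Fintype ι] [DecidableEq ι] [DecidableEq α]
    (c : AC ι α) (hdet : c.Deterministic) (hs : c.Smooth)
    (hv : c.vars = Finset.univ) (f : (ι → α) → ℝ)
    (hc : c.Computes f) (x : ι → α) (hx : 0 < f x) :
    ∃ s : AC.Sub c, (s.term = AC.graphOf x ∧ s.coeff = f x) ∧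
      ∀ t : AC.Sub c, t.term = AC.graphOf x → t.coeff ≠ 0 → t = s := by
  have hcx : c.evalAt x ≠ 0 := (hc x).symm ▸ hx.ne'
  obtain ⟨s, hsx, hsc⟩ := AC.exists_sub_term_subset_coeff_eq_evalAt hdet hcx
  refine ⟨s, ⟨AC.Sub.term_eq_graphOf hs hv hsx, hsc.trans (hc x)⟩, fun t htx ht => ?_⟩
  exact AC.Sub.eq_of_term_subset_graphOf hdet htx.subset ht hsx (hsc ▸ hcx)

/-- In a deterministic, decomposable and smooth circuit computing a factor `f`,
every full instantiation `x` with `f(x) > 0` has a unique `x`-subcircuit with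
non-zero coefficient, and its coefficient is `f(x)`. -/
theorem stmt6 {ι α : Type} [Fintype ι] [DecidableEq ι] [Fintype α] [DecidableEq α]
    (c : AC ι α) (hdet : c.Deterministic) (hd : c.Decomposable) (hs : c.Smooth)
    (hv : c.vars = Finset.univ) (f : (ι → α) → ℝ) (hf : ∀ x, 0 ≤ f x)
    (hc : c.Computes f) (x : ι → α) (hx : 0 < f x) :
    ∃ s : AC.Sub c, (s.term = AC.graphOf x ∧ s.coeff = f x) ∧
      ∀ t : AC.Sub c, t.term = AC.graphOf x → t.coeff ≠ 0 → t = s :=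
  stmt6_general c hdet hs hv f hc x hx
end

section
/- Let AC(X) be a deterministic, decomposable, and smooth arithmetic circuit computing a factor f(X), and let AC_max be the maximizer circuit obtained by replacing every +-node with a max-node. Then for every partial instantiation y of a subset Y ⊆ X, AC_max(y) = max over full instantiations x compatible with y of f(x). -/
/-!
Evaluating the maximizer circuit at `y` computes, bottom-up, the maximum of each node's value
over the instantiations compatible with `y`. At a `+`-node determinism makes the sum of the two
non-negative children equal to their maximum, and a maximum of maxima is a maximum. At a `*`-node
decomposability lets a maximizer of the left child be spliced with one of the right child, and
non-negativity makes the product of the maxima the maximum of the product.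
-/

section IsGreatest

variable {β γ : Type*}

theorem isGreatest_image_of_forall_eq {f : β → γ} {s : Set β} {a : γ} [Preorder γ]
    (hs : s.Nonempty) (h : ∀ x ∈ s, f x = a) : IsGreatest (f '' s) a := by
  rw [Set.image_congr h, hs.image_const]
  exact isGreatest_singleton

theorem IsGreatest.image_max [LinearOrder γ] {f g : β → γ} {s : Set β} {a b : γ}
    (hf : IsGreatest (f '' s) a) (hg : IsGreatest (g '' s) b) :
    IsGreatest ((fun x => max (f x) (g x)) '' s) (max a b) := by
  refine ⟨?_, ?_⟩
  · rcases le_total a b with hab | hba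
    · obtain ⟨x, hx, hgx⟩ := hg.1
      refine ⟨x, hx, ?_⟩
      beta_reduce
      rw [hgx, max_eq_right hab, max_eq_right ((hf.2 ⟨x, hx, rfl⟩).trans hab)]
    · obtain ⟨x, hx, hfx⟩ := hf.1
      refine ⟨x, hx, ?_⟩
      beta_reduce
      rw [hfx, max_eq_left hba, max_eq_left ((hg.2 ⟨x, hx, rfl⟩).trans hba)]
  · rintro _ ⟨x, hx, rfl⟩
    exact max_le_max (hf.2 ⟨x, hx, rfl⟩) (hg.2 ⟨x, hx, rfl⟩)

theorem IsGreatest.image_mul [MulZeroClass γ] [Preorder γ] [PosMulMono γ] [MulPosMono γ]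
    {f g : β → γ} {s : Set β} {a b : γ}
    (hf : IsGreatest (f '' s) a) (hg : IsGreatest (g '' s) b)
    (hf₀ : ∀ x ∈ s, 0 ≤ f x) (hg₀ : ∀ x ∈ s, 0 ≤ g x)
    (hsplice : ∀ x₁ ∈ s, ∀ x₂ ∈ s, ∃ x ∈ s, f x = f x₁ ∧ g x = g x₂) :
    IsGreatest ((fun x => f x * g x) '' s) (a * b) := by
  obtain ⟨x₁, hx₁, rfl⟩ := hf.1
  obtain ⟨x₂, hx₂, rfl⟩ := hg.1
  refine ⟨?_, ?_⟩
  · obtain ⟨x, hx, hfx, hgx⟩ := hsplice x₁ hx₁ x₂ hx₂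
    exact ⟨x, hx, by beta_reduce; rw [hfx, hgx]⟩
  · rintro _ ⟨x, hx, rfl⟩
    exact mul_le_mul (hf.2 ⟨x, hx, rfl⟩) (hg.2 ⟨x, hx, rfl⟩) (hg₀ x hx) (hf₀ x₁ hx₁)

end IsGreatest

theorem Multiset.forall_mem_add {β : Type*} {p : β → Prop} {s t : Multiset β} :
    (∀ a ∈ s + t, p a) ↔ (∀ a ∈ s, p a) ∧ ∀ a ∈ t, p a := by
  simp only [Multiset.mem_add, or_imp, forall_and]

namespace AC

variable {ι α : Type}

theorem Compat.update [DecidableEq ι] {x : ι → α} {y : ι → Option α} (hx : Compat x y) {i : ι}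
    (hi : y i = none) (v : α) : Compat (Function.update x i v) y := by
  intro j
  by_cases hj : j = i
  · subst hj
    exact Or.inl hi
  · simpa [hj] using hx j

theorem Compat.piecewise [DecidableEq ι] {x₁ x₂ : ι → α} {y : ι → Option α}
    (h₁ : Compat x₁ y) (h₂ : Compat x₂ y) (s : Finset ι) : Compat (s.piecewise x₁ x₂) y := by
  intro i
  by_cases hi : i ∈ s
  · simpa [hi] using h₁ i
  · simpa [hi] using h₂ i

theorem exists_compat [Nonempty α] (y : ι → Option α) : ∃ x, Compat x y :=
  ⟨fun i => (y i).getD (Classical.arbitrary α), fun i => by cases h : y i <;> simp [h]⟩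

theorem eval_nonneg (Λ : ι → α → Bool) :
    ∀ c : AC ι α, (∀ θ ∈ c.params, 0 ≤ θ) → 0 ≤ c.eval Λ
  | ind i v, _ => by unfold eval; split <;> norm_num
  | param θ, hp => hp θ (Multiset.mem_singleton_self θ)
  | sum l r, hp =>
    have ⟨hpl, hpr⟩ := Multiset.forall_mem_add.1 hp
    add_nonneg (eval_nonneg Λ l hpl) (eval_nonneg Λ r hpr)
  | prod l r, hp =>
    have ⟨hpl, hpr⟩ := Multiset.forall_mem_add.1 hp
    mul_nonneg (eval_nonneg Λ l hpl) (eval_nonneg Λ r hpr)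

variable [DecidableEq α]

theorem evalAt_eq_of_eqOn [DecidableEq ι] :
    ∀ (c : AC ι α) {x x' : ι → α}, Set.EqOn x x' c.vars → c.evalAt x = c.evalAt x'
  | ind i v, x, x', h => by
    simp [evalAt, eval, inputOf, h (Finset.mem_singleton_self i)]
  | param _, _, _, _ => rfl
  | sum l r, _, _, h => congrArg₂ (· + ·)
      (evalAt_eq_of_eqOn l fun _ hi => h (Finset.mem_union_left _ hi))
      (evalAt_eq_of_eqOn r fun _ hi => h (Finset.mem_union_right _ hi))
  | prod l r, _, _, h => congrArg₂ (· * ·)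
      (evalAt_eq_of_eqOn l fun _ hi => h (Finset.mem_union_left _ hi))
      (evalAt_eq_of_eqOn r fun _ hi => h (Finset.mem_union_right _ hi))

theorem isGreatest_evalMaxP_ind [Nonempty α] [DecidableEq ι] (i : ι) (v : α)
    (y : ι → Option α) :
    IsGreatest ((fun x => (ind i v).evalAt x) '' {x | Compat x y}) ((ind i v).evalMaxP y) := by
  obtain ⟨x₀, hx₀⟩ := exists_compat y
  cases hy : y i with
  | none =>
    have hmax : (ind i v).evalMaxP y = 1 := by simp [evalMaxP, evalMax, pinputOf, hy]
    rw [hmax]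
    refine ⟨⟨Function.update x₀ i v, hx₀.update hy v, by simp [evalAt, eval, inputOf]⟩, ?_⟩
    rintro _ ⟨x, -, rfl⟩
    dsimp only [evalAt, eval]
    split <;> norm_num
  | some w =>
    refine isGreatest_image_of_forall_eq ⟨x₀, hx₀⟩ fun x hx => ?_
    have hxi : x i = w := by simpa [hy, eq_comm] using hx i
    simp [evalAt, eval, inputOf, evalMaxP, evalMax, pinputOf, hy, hxi]

theorem isGreatest_evalMaxP [Nonempty α] [DecidableEq ι] :
    ∀ c : AC ι α, c.Deterministic → c.Decomposable → (∀ θ ∈ c.params, 0 ≤ θ) →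
      ∀ y : ι → Option α,
        IsGreatest ((fun x => c.evalAt x) '' {x | Compat x y}) (c.evalMaxP y)
  | ind i v, _, _, _, y => isGreatest_evalMaxP_ind i v y
  | param _, _, _, _, y => isGreatest_image_of_forall_eq (exists_compat y) fun _ _ => rfl
  | sum l r, ⟨hlr, hl, hr⟩, ⟨hdl, hdr⟩, hp, y => by
    obtain ⟨hpl, hpr⟩ := Multiset.forall_mem_add.1 hp
    have hsum_eq_max : ∀ x, (sum l r).evalAt x = max (l.evalAt x) (r.evalAt x) := fun x => by
      have hl₀ := eval_nonneg (inputOf x) l hpl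
      have hr₀ := eval_nonneg (inputOf x) r hpr
      rcases hlr x with h | h <;> simp_all [evalAt, eval]
    rw [funext hsum_eq_max]
    exact (isGreatest_evalMaxP l hl hdl hpl y).image_max (isGreatest_evalMaxP r hr hdr hpr y)
  | prod l r, ⟨hl, hr⟩, ⟨hdisj, hdl, hdr⟩, hp, y => by
    obtain ⟨hpl, hpr⟩ := Multiset.forall_mem_add.1 hp
    refine (isGreatest_evalMaxP l hl hdl hpl y).image_mul (isGreatest_evalMaxP r hr hdr hpr y)
      (fun _ _ => eval_nonneg _ l hpl) (fun _ _ => eval_nonneg _ r hpr)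
      fun x₁ h₁ x₂ h₂ => ⟨l.vars.piecewise x₁ x₂, Compat.piecewise h₁ h₂ _, ?_, ?_⟩
    · exact evalAt_eq_of_eqOn l fun i hi => Finset.piecewise_eq_of_mem _ _ _ hi
    · exact evalAt_eq_of_eqOn r fun i hi =>
        Finset.piecewise_eq_of_notMem _ _ _ (Finset.disjoint_right.mp hdisj hi)

end AC

theorem stmt7_general {ι α : Type} [DecidableEq ι] [DecidableEq α] [Nonempty α]
    (c : AC ι α) (hdet : c.Deterministic) (hd : c.Decomposable)
    (hp : ∀ θ ∈ c.params, 0 ≤ θ)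
    (f : (ι → α) → ℝ) (hc : c.Computes f) (y : ι → Option α) :
    IsGreatest {r : ℝ | ∃ x : ι → α, AC.Compat x y ∧ f x = r} (c.evalMaxP y) := by
  have h := AC.isGreatest_evalMaxP c hdet hd hp y
  rwa [funext hc] at h

/-- Correctness of the maximizer circuit: for a deterministic, decomposable and
smooth circuit computing a factor `f`, the maximizer-circuit value at any partial
instantiation `y` is the maximum of `f(x)` over full instantiations `x ∼ y`. -/
theorem stmt7 {ι α : Type} [Fintype ι] [DecidableEq ι] [Fintype α] [DecidableEq α] [Nonempty α]
    (c : AC ι α) (hdet : c.Deterministic) (hd : c.Decomposable) (hs : c.Smooth)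
    (hv : c.vars = Finset.univ) (hp : ∀ θ ∈ c.params, 0 ≤ θ)
    (f : (ι → α) → ℝ) (hf : ∀ x, 0 ≤ f x) (hc : c.Computes f) (y : ι → Option α) :
    IsGreatest {r : ℝ | ∃ x : ι → α, AC.Compat x y ∧ f x = r} (c.evalMaxP y) :=
  stmt7_general c hdet hd hp f hc y
end

section
/- Let f(X) be a Boolean factor (f(x) ∈ {0,1} for all x). Suppose AC(X) is an arithmetic circuit all of whose parameters lie in {0,1}, which is decomposable, smooth, free of dead nodes, and computes f. Then AC is deterministic: for every full instantiation x, every +-node has at most one non-zero input when the circuit is evaluated at x. -/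
namespace AC

variable {ι α : Type} [Fintype ι] [DecidableEq ι] [Fintype α] [DecidableEq α]

/-- Node occurrences (positions) in a circuit. -/
inductive Pos : AC ι α → Type where
  | here (c : AC ι α) : Pos c
  | sumL {l r : AC ι α} : Pos l → Pos (AC.sum l r)
  | sumR {l r : AC ι α} : Pos r → Pos (AC.sum l r)
  | prodL {l r : AC ι α} : Pos l → Pos (AC.prod l r)
  | prodR {l r : AC ι α} : Pos r → Pos (AC.prod l r)

/-- A complete subcircuit passes through (contains) a given node occurrence. -/
def Through : {c : AC ι α} → Sub c → Pos c → Prop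
  | _, _, .here _ => True
  | _, .sumL s, .sumL p => Through s p
  | _, .sumL _, .sumR _ => False
  | _, .sumR _, .sumL _ => False
  | _, .sumR s, .sumR p => Through s p
  | _, .prod s _, .prodL p => Through s p
  | _, .prod _ t, .prodR p => Through t p

end AC

/-!
Expanding the circuit, `AC(x)` is the sum of the coefficients of the complete subcircuits whose
term is satisfied by `x`. With parameters in `{0,1}` every coefficient is `0` or `1`, so
`AC(x) = f(x) ≤ 1` allows at most one such subcircuit with nonzero coefficient at each `x`.
This property descends from a node to its children: to a child of a `+`-node directly, and to a
child of a `*`-node by completing its subcircuits with a fixed subcircuit of the sibling with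
nonzero coefficient (it exists since no node is dead) and by changing `x` only on the sibling's
variables, which decomposability keeps apart. At a `+`-node whose two inputs are both non-zero
at `x`, each input contributes a subcircuit with nonzero coefficient satisfied by `x`, and these
two are distinct.
-/

namespace AC

variable {ι α : Type}

instance (i : ι) (v : α) : Unique (Sub (ind i v)) where
  default := .ind i v
  uniq s := by cases s; rfl

instance (θ : ℝ) : Unique (Sub (param θ : AC ι α)) where
  default := .param θ
  uniq s := by cases s; rfl

def Sub.sumEquiv (l r : AC ι α) : Sub (AC.sum l r) ≃ Sub l ⊕ Sub r where
  toFun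
    | .sumL s => .inl s
    | .sumR s => .inr s
  invFun
    | .inl s => .sumL s
    | .inr s => .sumR s
  left_inv s := by cases s <;> rfl
  right_inv s := by cases s <;> rfl

def Sub.prodEquiv (l r : AC ι α) : Sub (AC.prod l r) ≃ Sub l × Sub r where
  toFun | .prod s t => (s, t)
  invFun st := .prod st.1 st.2
  left_inv s := by cases s; rfl
  right_inv _ := rfl

instance Sub.instFintype : (c : AC ι α) → Fintype (Sub c)
  | .ind _ _ => Unique.fintype
  | .param _ => Unique.fintype
  | .sum l r =>
    letI := instFintype l; letI := instFintype r; .ofEquiv _ (sumEquiv l r).symm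
  | .prod l r =>
    letI := instFintype l; letI := instFintype r; .ofEquiv _ (prodEquiv l r).symm

theorem Sub.coeff_eq_zero_or_one :
    {c : AC ι α} → (∀ θ ∈ c.params, θ = 0 ∨ θ = 1) → (s : Sub c) → s.coeff = 0 ∨ s.coeff = 1
  | _, _, .ind _ _ => .inr rfl
  | .param θ, h, .param _ => h θ (Multiset.mem_singleton_self θ)
  | _, h, .sumL s => s.coeff_eq_zero_or_one fun θ hθ => h θ (Multiset.mem_add.2 (.inl hθ))
  | _, h, .sumR s => s.coeff_eq_zero_or_one fun θ hθ => h θ (Multiset.mem_add.2 (.inr hθ))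
  | _, h, .prod s t => by
    rcases s.coeff_eq_zero_or_one fun θ hθ => h θ (Multiset.mem_add.2 (.inl hθ)) with hs | hs <;>
    rcases t.coeff_eq_zero_or_one fun θ hθ => h θ (Multiset.mem_add.2 (.inr hθ)) with ht | ht <;>
    simp [Sub.coeff, hs, ht]

def Pos.IsLive {c : AC ι α} (p : Pos c) : Prop :=
  ∃ s : Sub c, Through s p ∧ s.coeff ≠ 0

namespace Pos.IsLive

variable {l r : AC ι α}

theorem of_sumL {p : Pos l} : (Pos.sumL p : Pos (AC.sum l r)).IsLive → p.IsLive
  | ⟨.sumL s, hs, h0⟩ => ⟨s, hs, h0⟩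

theorem of_sumR {p : Pos r} : (Pos.sumR p : Pos (AC.sum l r)).IsLive → p.IsLive
  | ⟨.sumR s, hs, h0⟩ => ⟨s, hs, h0⟩

theorem of_prodL {p : Pos l} : (Pos.prodL p : Pos (AC.prod l r)).IsLive → p.IsLive
  | ⟨.prod s _, hs, h0⟩ => ⟨s, hs, left_ne_zero_of_mul h0⟩

theorem of_prodR {p : Pos r} : (Pos.prodR p : Pos (AC.prod l r)).IsLive → p.IsLive
  | ⟨.prod _ t, ht, h0⟩ => ⟨t, ht, right_ne_zero_of_mul h0⟩

end Pos.IsLive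

variable [DecidableEq ι] [DecidableEq α]

def Sub.Matches {c : AC ι α} (s : Sub c) (x : ι → α) : Prop :=
  ∀ q ∈ s.term, x q.1 = q.2

instance {c : AC ι α} (s : Sub c) (x : ι → α) : Decidable (s.Matches x) :=
  inferInstanceAs (Decidable (∀ q ∈ s.term, x q.1 = q.2))

theorem Sub.matches_prod {l r : AC ι α} (s : Sub l) (t : Sub r) (x : ι → α) :
    (Sub.prod s t).Matches x ↔ s.Matches x ∧ t.Matches x :=
  Finset.forall_mem_union

theorem evalAt_eq_sum (x : ι → α) :
    (c : AC ι α) → c.evalAt x = ∑ s : Sub c, if s.Matches x then s.coeff else 0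
  | .ind i v => by
    simp [evalAt, eval, inputOf, Sub.Matches, default, Sub.term, Sub.coeff]
  | .param θ => by
    simp [evalAt, eval, Sub.Matches, default, Sub.term, Sub.coeff]
  | .sum l r => by
    rw [← (Sub.sumEquiv l r).symm.sum_comp, Fintype.sum_sum_type]
    exact congrArg₂ (· + ·) (evalAt_eq_sum x l) (evalAt_eq_sum x r)
  | .prod l r => by
    rw [← (Sub.prodEquiv l r).symm.sum_comp, Fintype.sum_prod_type]
    change l.evalAt x * r.evalAt x = _
    rw [evalAt_eq_sum x l, evalAt_eq_sum x r, Finset.sum_mul_sum]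
    refine Finset.sum_congr rfl fun s _ => Finset.sum_congr rfl fun t _ => ?_
    rw [ite_zero_mul_ite_zero]
    exact if_congr (Sub.matches_prod s t x).symm rfl rfl

theorem exists_matches_of_evalAt_ne_zero {c : AC ι α} {x : ι → α} (h : c.evalAt x ≠ 0) :
    ∃ s : Sub c, s.coeff ≠ 0 ∧ s.Matches x := by
  rw [evalAt_eq_sum] at h
  obtain ⟨s, -, hs⟩ := Finset.exists_ne_zero_of_sum_ne_zero h
  by_cases hsx : s.Matches x
  · exact ⟨s, by rwa [if_pos hsx] at hs, hsx⟩
  · exact absurd (if_neg hsx) hs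

theorem Sub.fst_mem_vars : {c : AC ι α} → (s : Sub c) → ∀ {i v}, (i, v) ∈ s.term → i ∈ c.vars
  | _, .ind _ _, _, _, hq => by
    simp only [Sub.term, Finset.mem_singleton, Prod.mk.injEq] at hq
    simp [vars, hq.1]
  | _, .param _, _, _, hq => absurd hq (Finset.notMem_empty _)
  | _, .sumL s, _, _, hq => Finset.mem_union_left _ (s.fst_mem_vars hq)
  | _, .sumR s, _, _, hq => Finset.mem_union_right _ (s.fst_mem_vars hq)
  | _, .prod s t, _, _, hq => (Finset.mem_union.1 hq).elim
      (fun h => Finset.mem_union_left _ (s.fst_mem_vars h))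
      (fun h => Finset.mem_union_right _ (t.fst_mem_vars h))

theorem Sub.eq_of_mem_term : {c : AC ι α} → c.Decomposable → (s : Sub c) →
    ∀ {i v w}, (i, v) ∈ s.term → (i, w) ∈ s.term → v = w
  | _, _, .ind _ _, _, _, _, hv, hw => by
    simp only [Sub.term, Finset.mem_singleton, Prod.mk.injEq] at hv hw
    exact hv.2.trans hw.2.symm
  | _, _, .param _, _, _, _, hv, _ => absurd hv (Finset.notMem_empty _)
  | _, hd, .sumL s, _, _, _, hv, hw => s.eq_of_mem_term hd.1 hv hw
  | _, hd, .sumR s, _, _, _, hv, hw => s.eq_of_mem_term hd.2 hv hw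
  | _, hd, .prod s t, _, _, _, hv, hw => by
    rcases Finset.mem_union.1 hv with hv | hv <;> rcases Finset.mem_union.1 hw with hw | hw
    · exact s.eq_of_mem_term hd.2.1 hv hw
    · exact (Finset.disjoint_left.1 hd.1 (s.fst_mem_vars hv) (t.fst_mem_vars hw)).elim
    · exact (Finset.disjoint_left.1 hd.1 (s.fst_mem_vars hw) (t.fst_mem_vars hv)).elim
    · exact t.eq_of_mem_term hd.2.2 hv hw

theorem Sub.exists_matches_of_disjoint {l r : AC ι α} (hlr : Disjoint l.vars r.vars)
    (hr : r.Decomposable) (t : Sub r) (x : ι → α) :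
    ∃ x' : ι → α, t.Matches x' ∧ ∀ s : Sub l, s.Matches x → s.Matches x' := by
  classical
  refine ⟨fun i => if h : ∃ v, (i, v) ∈ t.term then h.choose else x i, ?_, ?_⟩
  · rintro ⟨i, v⟩ hv
    have h : ∃ v, (i, v) ∈ t.term := ⟨v, hv⟩
    exact (dif_pos h).trans (t.eq_of_mem_term hr h.choose_spec hv)
  · rintro s hs ⟨i, v⟩ hv
    have h : ¬∃ w, (i, w) ∈ t.term := fun ⟨_, hw⟩ =>
      Finset.disjoint_left.1 hlr (s.fst_mem_vars hv) (t.fst_mem_vars hw)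
    exact (dif_neg h).trans (hs _ hv)

def NonzeroMatchesSubsingleton (c : AC ι α) : Prop :=
  ∀ x : ι → α, {s : Sub c | s.coeff ≠ 0 ∧ s.Matches x}.Subsingleton

namespace NonzeroMatchesSubsingleton

variable {l r : AC ι α}

theorem sum_left (h : (AC.sum l r).NonzeroMatchesSubsingleton) : l.NonzeroMatchesSubsingleton :=
  fun x s hs t ht => Sub.sumL.inj ((h x) (x := .sumL s) hs (y := .sumL t) ht)

theorem sum_right (h : (AC.sum l r).NonzeroMatchesSubsingleton) : r.NonzeroMatchesSubsingleton :=
  fun x s hs t ht => Sub.sumR.inj ((h x) (x := .sumR s) hs (y := .sumR t) ht)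

theorem prod_left (h : (AC.prod l r).NonzeroMatchesSubsingleton) (hlr : Disjoint l.vars r.vars)
    (hr : r.Decomposable) {t : Sub r} (ht : t.coeff ≠ 0) : l.NonzeroMatchesSubsingleton := by
  intro x s₁ ⟨hs₁, hs₁x⟩ s₂ ⟨hs₂, hs₂x⟩
  obtain ⟨x', htx', hx'⟩ := Sub.exists_matches_of_disjoint hlr hr t x
  refine (Sub.prod.inj ((h x') (x := .prod s₁ t) ⟨mul_ne_zero hs₁ ht, ?_⟩
    (y := .prod s₂ t) ⟨mul_ne_zero hs₂ ht, ?_⟩)).1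
  · exact (Sub.matches_prod _ _ _).2 ⟨hx' s₁ hs₁x, htx'⟩
  · exact (Sub.matches_prod _ _ _).2 ⟨hx' s₂ hs₂x, htx'⟩

theorem prod_right (h : (AC.prod l r).NonzeroMatchesSubsingleton) (hlr : Disjoint l.vars r.vars)
    (hl : l.Decomposable) {s : Sub l} (hs : s.coeff ≠ 0) : r.NonzeroMatchesSubsingleton := by
  intro x t₁ ⟨ht₁, ht₁x⟩ t₂ ⟨ht₂, ht₂x⟩
  obtain ⟨x', hsx', hx'⟩ := Sub.exists_matches_of_disjoint hlr.symm hl s x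
  refine (Sub.prod.inj ((h x') (x := .prod s t₁) ⟨mul_ne_zero hs ht₁, ?_⟩
    (y := .prod s t₂) ⟨mul_ne_zero hs ht₂, ?_⟩)).2
  · exact (Sub.matches_prod _ _ _).2 ⟨hsx', hx' t₁ ht₁x⟩
  · exact (Sub.matches_prod _ _ _).2 ⟨hsx', hx' t₂ ht₂x⟩

end NonzeroMatchesSubsingleton

theorem nonzeroMatchesSubsingleton_of_evalAt_le_one {c : AC ι α}
    (hparams : ∀ θ ∈ c.params, θ = 0 ∨ θ = 1) (hle : ∀ x, c.evalAt x ≤ 1) :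
    c.NonzeroMatchesSubsingleton := by
  classical
  intro x s ⟨hs, hsx⟩ t ⟨ht, htx⟩
  by_contra hst
  have hcoeff (u : Sub c) (hu : u.coeff ≠ 0) : u.coeff = 1 :=
    (u.coeff_eq_zero_or_one hparams).resolve_left hu
  have hnonneg (u : Sub c) : 0 ≤ if u.Matches x then u.coeff else 0 := by
    split_ifs
    · rcases u.coeff_eq_zero_or_one hparams with h | h <;> simp [h]
    · exact le_rfl
  have : (2 : ℝ) ≤ c.evalAt x := calc
    (2 : ℝ) = ∑ u ∈ ({s, t} : Finset (Sub c)), if u.Matches x then u.coeff else 0 := by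
      rw [Finset.sum_pair hst, if_pos hsx, if_pos htx, hcoeff s hs, hcoeff t ht]; norm_num
    _ ≤ ∑ u : Sub c, if u.Matches x then u.coeff else 0 :=
      Finset.sum_le_sum_of_subset_of_nonneg (Finset.subset_univ _) fun u _ _ => hnonneg u
    _ = c.evalAt x := (evalAt_eq_sum x c).symm
  linarith [hle x]

theorem deterministic_of_nonzeroMatchesSubsingleton : {c : AC ι α} → c.Decomposable →
    (∀ p : Pos c, p.IsLive) → c.NonzeroMatchesSubsingleton → c.Deterministic
  | .ind _ _, _, _, _ => trivial
  | .param _, _, _, _ => trivial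
  | .sum l r, hd, hlive, hu => by
    refine ⟨fun x => ?_,
      deterministic_of_nonzeroMatchesSubsingleton hd.1 (fun p => (hlive (.sumL p)).of_sumL)
        hu.sum_left,
      deterministic_of_nonzeroMatchesSubsingleton hd.2 (fun p => (hlive (.sumR p)).of_sumR)
        hu.sum_right⟩
    by_contra! h
    obtain ⟨s, hs⟩ := exists_matches_of_evalAt_ne_zero h.1
    obtain ⟨t, ht⟩ := exists_matches_of_evalAt_ne_zero h.2
    nomatch (hu x) (x := .sumL s) hs (y := .sumR t) ht
  | .prod l r, ⟨hlr, hl, hr⟩, hlive, hu => by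
    obtain ⟨⟨s, t⟩, -, hst⟩ := hlive (.here _)
    exact ⟨deterministic_of_nonzeroMatchesSubsingleton hl (fun p => (hlive (.prodL p)).of_prodL)
        (hu.prod_left hlr hr (right_ne_zero_of_mul hst)),
      deterministic_of_nonzeroMatchesSubsingleton hr (fun p => (hlive (.prodR p)).of_prodR)
        (hu.prod_right hlr hl (left_ne_zero_of_mul hst))⟩

end AC

theorem stmt9_general {ι α : Type} [DecidableEq ι] [DecidableEq α]
    (c : AC ι α) (f : (ι → α) → ℝ) (hbool : ∀ x, f x = 0 ∨ f x = 1)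
    (hparams : ∀ θ ∈ c.params, θ = 0 ∨ θ = 1)
    (hd : c.Decomposable)
    (hnd : ∀ p : AC.Pos c, ∃ s : AC.Sub c, AC.Through s p ∧ s.coeff ≠ 0)
    (hc : c.Computes f) :
    c.Deterministic := by
  refine AC.deterministic_of_nonzeroMatchesSubsingleton hd hnd
    (AC.nonzeroMatchesSubsingleton_of_evalAt_le_one hparams fun x => ?_)
  rw [hc x]
  rcases hbool x with h | h <;> simp [h]

/-- Parametric incompleteness: a decomposable, smooth circuit with all parameters
in `{0,1}`, free of dead nodes, that computes a Boolean factor must be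
deterministic. -/
theorem stmt9 {ι α : Type} [Fintype ι] [DecidableEq ι] [Fintype α] [DecidableEq α]
    (c : AC ι α) (f : (ι → α) → ℝ) (hbool : ∀ x, f x = 0 ∨ f x = 1)
    (hparams : ∀ θ ∈ c.params, θ = 0 ∨ θ = 1)
    (hd : c.Decomposable) (hs : c.Smooth) (hv : c.vars = Finset.univ)
    (hnd : ∀ p : AC.Pos c, ∃ s : AC.Sub c, AC.Through s p ∧ s.coeff ≠ 0)
    (hc : c.Computes f) :
    c.Deterministic :=
  stmt9_general c f hbool hparams hd hnd hc
end

section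
/- If an arithmetic circuit AC(X) computes the marginals of a factor f(X), then it computes f(X); however, the converse fails: there exists an arithmetic circuit that computes a factor but does not compute its marginals. -/
namespace AC

theorem compat_some_iff {ι α : Type} {x x' : ι → α} :
    Compat x' (fun i => some (x i)) ↔ x' = x := by
  simp [Compat, funext_iff, eq_comm]

theorem evalP_some {ι α : Type} [DecidableEq α] (x : ι → α) (c : AC ι α) :
    c.evalP (fun i => some (x i)) = c.evalAt x := rfl

section

variable {ι α : Type} [Fintype ι] [DecidableEq ι] [Fintype α] [DecidableEq α]

theorem margSum_some (f : (ι → α) → ℝ) (x : ι → α) : margSum f (fun i => some (x i)) = f x := by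
  simp [margSum, compat_some_iff]

theorem margSum_none (f : (ι → α) → ℝ) : margSum f (fun _ => none) = ∑ x, f x := by
  simp [margSum, Compat]

theorem ComputesMarginals.computes {c : AC ι α} {f : (ι → α) → ℝ} (h : c.ComputesMarginals f) :
    c.Computes f := fun x => by
  rw [← evalP_some, h, margSum_some]

end

/-- The paper's circuit `[λ_a + 2λ_¬a][3λ_aλ_b + 4λ_aλ_¬b + 5λ_¬aλ_b + 6λ_¬aλ_¬b]`, with
`a`, `b` the variables `0`, `1` and `¬` the value `false`. -/
def productCircuit : AC (Fin 2) Bool :=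
  let monomial (θ : ℝ) (a b : Bool) : AC (Fin 2) Bool := prod (param θ) (prod (ind 0 a) (ind 1 b))
  prod (sum (ind 0 true) (prod (param 2) (ind 0 false)))
    (sum (sum (monomial 3 true true) (monomial 4 true false))
      (sum (monomial 5 false true) (monomial 6 false false)))

def productFactor (x : Fin 2 → Bool) : ℝ :=
  (if x 0 then 1 else 2) * (if x 0 then (if x 1 then 3 else 4) else (if x 1 then 5 else 6))

theorem productFactor_nonneg (x : Fin 2 → Bool) : 0 ≤ productFactor x := by
  unfold productFactor
  split_ifs <;> norm_num

theorem productCircuit_computes : productCircuit.Computes productFactor := by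
  intro x
  cases h0 : x 0 <;> cases h1 : x 1 <;>
    simp [productCircuit, productFactor, evalAt, eval, inputOf, h0, h1]

theorem productCircuit_evalP_none : productCircuit.evalP (fun _ => none) = 54 := by
  simp [productCircuit, evalP, eval, pinputOf]
  norm_num

theorem sum_productFactor : ∑ x, productFactor x = 29 := by
  rw [← (piFinTwoEquiv fun _ => Bool).symm.sum_comp]
  simp [productFactor, Fintype.sum_prod_type]
  norm_num

theorem productCircuit_not_computesMarginals :
    ¬ productCircuit.ComputesMarginals productFactor := fun h => by
  have hempty := h fun _ => none
  rw [productCircuit_evalP_none, margSum_none, sum_productFactor] at hempty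
  norm_num at hempty

end AC

/-- Computing marginals implies computing the factor, but not conversely: there is
a circuit (over two binary variables) that computes a factor without computing its
marginals. -/
theorem stmt12 {ι α : Type} [Fintype ι] [DecidableEq ι] [Fintype α] [DecidableEq α] :
    (∀ (c : AC ι α) (f : (ι → α) → ℝ), c.ComputesMarginals f → c.Computes f) ∧
    (∃ (c : AC (Fin 2) Bool) (f : (Fin 2 → Bool) → ℝ),
      (∀ x, 0 ≤ f x) ∧ c.Computes f ∧ ¬ c.ComputesMarginals f) :=
  ⟨fun _ _ => AC.ComputesMarginals.computes,
    ⟨AC.productCircuit, AC.productFactor, AC.productFactor_nonneg, AC.productCircuit_computes,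
      AC.productCircuit_not_computesMarginals⟩⟩
end

section
/- Let AC(X) be a decomposable and smooth arithmetic circuit computing the marginals of a factor f(X), with X partitioned into Y and Z. The circuit obtained by setting all indicators λ_z of variables in Z to the constant 1 is a circuit over Y that computes the marginals of the projection g(Y) = Σ_Z f(X). -/
namespace AC

variable {ι α : Type} [Fintype ι] [DecidableEq ι] [Fintype α] [DecidableEq α]

/-- Replace every indicator of a variable in `Z` by the constant parameter `1`. -/
def fixZ (Z : Finset ι) : AC ι α → AC ι α
  | ind i v => if i ∈ Z then param 1 else ind i v
  | param θ => param θ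
  | sum l r => sum (fixZ Z l) (fixZ Z r)
  | prod l r => prod (fixZ Z l) (fixZ Z r)

end AC


namespace AC

variable {ι α : Type}

theorem pinputOf_of_eq_none [DecidableEq α] {y : ι → Option α} {i : ι} (hi : y i = none)
    (v : α) : pinputOf y i v = true := by
  simp [pinputOf, hi]

variable [DecidableEq ι]

theorem vars_fixZ (Z : Finset ι) (c : AC ι α) : (c.fixZ Z).vars = c.vars \ Z := by
  induction c with
  | ind i v =>
    by_cases h : i ∈ Z
    · simp [fixZ, vars, h, eq_comm (a := ∅)]
    · simp [fixZ, vars, h, eq_comm (a := ({i} : Finset ι))]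
  | param θ => simp [fixZ, vars]
  | sum l r ihl ihr => simp [fixZ, vars, ihl, ihr, Finset.union_sdiff_distrib]
  | prod l r ihl ihr => simp [fixZ, vars, ihl, ihr, Finset.union_sdiff_distrib]

theorem eval_fixZ {Z : Finset ι} {Λ : ι → α → Bool} (hΛ : ∀ i ∈ Z, ∀ v, Λ i v = true)
    (c : AC ι α) : (c.fixZ Z).eval Λ = c.eval Λ := by
  induction c with
  | ind i v =>
    by_cases h : i ∈ Z
    · simp [fixZ, eval, h, hΛ i h v]
    · simp [fixZ, h]
  | param θ => rfl
  | sum l r ihl ihr => simp only [fixZ, eval, ihl, ihr]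
  | prod l r ihl ihr => simp only [fixZ, eval, ihl, ihr]

theorem evalP_fixZ [DecidableEq α] {Z : Finset ι} {y : ι → Option α}
    (hy : ∀ i ∈ Z, y i = none) (c : AC ι α) : (c.fixZ Z).evalP y = c.evalP y :=
  eval_fixZ (fun i hi => pinputOf_of_eq_none (hy i hi)) c

end AC

theorem stmt14_general {ι α : Type} [Fintype ι] [DecidableEq ι] [Fintype α] [DecidableEq α]
    (c : AC ι α) (hv : c.vars = Finset.univ)
    (f : (ι → α) → ℝ) (hm : c.ComputesMarginals f)
    (Z : Finset ι) :
    (c.fixZ Z).vars = Finset.univ \ Z ∧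
    ∀ y : ι → Option α, (∀ i ∈ Z, y i = none) →
      (c.fixZ Z).evalP y = AC.margSum f y :=
  ⟨hv ▸ AC.vars_fixZ Z c, fun y hy => (AC.evalP_fixZ hy c).trans (hm y)⟩

/-- Setting the indicators of variables `Z` to `1` in a decomposable and smooth
circuit that computes the marginals of `f` yields a circuit over the remaining
variables `Y` that computes the marginals of the projection `g(Y) = Σ_Z f`. -/
theorem stmt14 {ι α : Type} [Fintype ι] [DecidableEq ι] [Fintype α] [DecidableEq α]
    (c : AC ι α) (hd : c.Decomposable) (hs : c.Smooth) (hv : c.vars = Finset.univ)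
    (f : (ι → α) → ℝ) (hf : ∀ x, 0 ≤ f x) (hm : c.ComputesMarginals f)
    (Z : Finset ι) :
    (c.fixZ Z).vars = Finset.univ \ Z ∧
    ∀ y : ι → Option α, (∀ i ∈ Z, y i = none) →
      (c.fixZ Z).evalP y = AC.margSum f y :=
  stmt14_general c hv f hm Z
end

section
/- In a decomposable and smooth arithmetic circuit, for a *-node n with children c_1, …, c_k, the complete subcircuits rooted at n correspond bijectively to tuples of complete subcircuits rooted at its children, the term of the combined subcircuit is the disjoint union of the children's terms, and its coefficient is the product of the children's coefficients. -/
namespace AC.Sub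

variable {ι α : Type} [DecidableEq ι] [DecidableEq α]

theorem mem_vars_of_mem_term : ∀ {c : AC ι α} (s : Sub c) {i : ι} {v : α},
    (i, v) ∈ s.term → i ∈ c.vars
  | _, .ind _ _, _, _, h => by
      simp only [term, Finset.mem_singleton, Prod.mk.injEq] at h
      simp [vars, h.1]
  | _, .param _, _, _, h => by simp [term] at h
  | _, .sumL s, _, _, h => Finset.mem_union_left _ (mem_vars_of_mem_term s h)
  | _, .sumR s, _, _, h => Finset.mem_union_right _ (mem_vars_of_mem_term s h)
  | _, .prod s t, _, _, h => by
      rcases Finset.mem_union.mp h with h | h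
      · exact Finset.mem_union_left _ (mem_vars_of_mem_term s h)
      · exact Finset.mem_union_right _ (mem_vars_of_mem_term t h)

theorem disjoint_term_of_disjoint_vars {c d : AC ι α} (h : Disjoint c.vars d.vars)
    (s : Sub c) (t : Sub d) : Disjoint s.term t.term :=
  Finset.disjoint_left.mpr fun {_} hs ht =>
    Finset.disjoint_left.mp h (mem_vars_of_mem_term s hs) (mem_vars_of_mem_term t ht)

def prodEquiv_s15 (l r : AC ι α) : Sub (.prod l r) ≃ Sub l × Sub r where
  toFun | .prod s t => (s, t)
  invFun p := .prod p.1 p.2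
  left_inv | .prod _ _ => rfl
  right_inv _ := rfl

end AC.Sub

theorem stmt15_general {ι α : Type} [DecidableEq ι] [DecidableEq α]
    (l r : AC ι α) (hd : (AC.prod l r).Decomposable) :
    ∃ e : AC.Sub (AC.prod l r) ≃ AC.Sub l × AC.Sub r,
      ∀ s : AC.Sub (AC.prod l r),
        s.term = (e s).1.term ∪ (e s).2.term ∧
        Disjoint (e s).1.term (e s).2.term ∧
        s.coeff = (e s).1.coeff * (e s).2.coeff := by
  refine ⟨AC.Sub.prodEquiv_s15 l r, fun | .prod s t => ?_⟩
  exact ⟨rfl, AC.Sub.disjoint_term_of_disjoint_vars hd.1 s t, rfl⟩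

/-- In a decomposable (and smooth) circuit, the complete subcircuits rooted at a
`*`-node correspond bijectively to tuples of complete subcircuits of its children;
the combined term is the disjoint union of the children's terms and the combined
coefficient is the product of the children's coefficients. -/
theorem stmt15 {ι α : Type} [Fintype ι] [DecidableEq ι] [Fintype α] [DecidableEq α]
    (l r : AC ι α) (hd : (AC.prod l r).Decomposable) (hs : (AC.prod l r).Smooth) :
    ∃ e : AC.Sub (AC.prod l r) ≃ AC.Sub l × AC.Sub r,
      ∀ s : AC.Sub (AC.prod l r),
        s.term = (e s).1.term ∪ (e s).2.term ∧
        Disjoint (e s).1.term (e s).2.term ∧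
        s.coeff = (e s).1.coeff * (e s).2.coeff :=
  stmt15_general l r hd
end

section
/- If a decomposable and smooth arithmetic circuit AC(X) computes a factor f(X), then replacing every +-node by a max-node and evaluating at a full instantiation x yields a value AC_max(x) ≤ f(x), with equality not holding in general when the circuit is not deterministic. -/
/-! With non-negative parameters every node has a non-negative value, so node by node
`max a b ≤ a + b` and products are monotone: the maximizer never exceeds `AC(x) = f(x)`.
Equality fails as soon as a `+`-node has two non-zero children at `x`: in `2λ_x + 3λ_x + λ_¬x`
both `2λ_x` and `3λ_x` are non-zero at `x = true`, and the maximizer reads `3` instead of `5`. -/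

namespace AC

variable {ι α : Type}

theorem forall_params_sum_iff {p : ℝ → Prop} {l r : AC ι α} :
    (∀ θ ∈ (sum l r).params, p θ) ↔ (∀ θ ∈ l.params, p θ) ∧ ∀ θ ∈ r.params, p θ := by
  simp only [params, Multiset.mem_add, or_imp, forall_and]

theorem forall_params_prod_iff {p : ℝ → Prop} {l r : AC ι α} :
    (∀ θ ∈ (prod l r).params, p θ) ↔ (∀ θ ∈ l.params, p θ) ∧ ∀ θ ∈ r.params, p θ := by
  simp only [params, Multiset.mem_add, or_imp, forall_and]

theorem evalMax_nonneg (Λ : ι → α → Bool) {c : AC ι α} (h : ∀ θ ∈ c.params, 0 ≤ θ) :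
    0 ≤ c.evalMax Λ := by
  induction c with
  | ind i v => unfold evalMax; split <;> norm_num
  | param θ => exact h θ (Multiset.mem_singleton_self θ)
  | sum l r ihl _ =>
    exact (ihl (forall_params_sum_iff.mp h).1).trans (le_max_left _ _)
  | prod l r ihl ihr =>
    obtain ⟨hl, hr⟩ := forall_params_prod_iff.mp h
    exact mul_nonneg (ihl hl) (ihr hr)

theorem evalMax_le_eval (Λ : ι → α → Bool) {c : AC ι α} (h : ∀ θ ∈ c.params, 0 ≤ θ) :
    c.evalMax Λ ≤ c.eval Λ := by
  induction c with
  | ind i v => rfl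
  | param θ => rfl
  | sum l r ihl ihr =>
    obtain ⟨hl, hr⟩ := forall_params_sum_iff.mp h
    have := evalMax_nonneg Λ hl
    have := evalMax_nonneg Λ hr
    show max (l.evalMax Λ) (r.evalMax Λ) ≤ l.eval Λ + r.eval Λ
    exact max_le (by linarith [ihl hl, ihr hr]) (by linarith [ihl hl, ihr hr])
  | prod l r ihl ihr =>
    obtain ⟨hl, hr⟩ := forall_params_prod_iff.mp h
    exact mul_le_mul (ihl hl) (ihr hr) (evalMax_nonneg Λ hr)
      ((evalMax_nonneg Λ hl).trans (ihl hl))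

theorem evalMaxAt_le_of_computes [DecidableEq α] {c : AC ι α} {f : (ι → α) → ℝ}
    (h : ∀ θ ∈ c.params, 0 ≤ θ) (hf : c.Computes f) (x : ι → α) : c.evalMaxAt x ≤ f x :=
  hf x ▸ evalMax_le_eval (inputOf x) h

def twoThreeOne : AC (Fin 1) Bool :=
  sum (sum (prod (param 2) (ind 0 true)) (prod (param 3) (ind 0 true))) (ind 0 false)

theorem twoThreeOne_decomposable : twoThreeOne.Decomposable := by
  simp [twoThreeOne, Decomposable, vars]

theorem twoThreeOne_smooth : twoThreeOne.Smooth := by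
  simp [twoThreeOne, Smooth, vars]

theorem twoThreeOne_vars : twoThreeOne.vars = Finset.univ := by
  decide

theorem twoThreeOne_params_nonneg : ∀ θ ∈ twoThreeOne.params, 0 ≤ θ := by
  intro θ hθ
  simp only [twoThreeOne, params, Multiset.mem_add, Multiset.mem_singleton,
    Multiset.notMem_zero, or_false] at hθ
  rcases hθ with rfl | rfl <;> norm_num

theorem twoThreeOne_evalAt_true : twoThreeOne.evalAt (fun _ => true) = 5 := by
  norm_num [twoThreeOne, evalAt, eval, inputOf]

theorem twoThreeOne_evalMaxAt_true : twoThreeOne.evalMaxAt (fun _ => true) = 3 := by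
  norm_num [twoThreeOne, evalMaxAt, evalMax, inputOf]

theorem not_deterministic_twoThreeOne : ¬ twoThreeOne.Deterministic := by
  rintro ⟨-, ⟨hdisj, -⟩, -⟩
  rcases hdisj (fun _ => true) with h | h <;> norm_num [evalAt, eval, inputOf] at h

end AC

theorem stmt18_general {ι α : Type} [Fintype ι] [DecidableEq ι] [DecidableEq α] :
    (∀ (c : AC ι α) (f : (ι → α) → ℝ), c.Decomposable → c.Smooth →
      c.vars = Finset.univ → (∀ θ ∈ c.params, 0 ≤ θ) → c.Computes f →
      ∀ x : ι → α, c.evalMaxAt x ≤ f x) ∧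
    (∃ (c : AC (Fin 1) Bool) (f : (Fin 1 → Bool) → ℝ),
      c.Decomposable ∧ c.Smooth ∧ c.vars = Finset.univ ∧
      (∀ θ ∈ c.params, 0 ≤ θ) ∧ c.Computes f ∧ ¬ c.Deterministic ∧
      ∃ x : Fin 1 → Bool, c.evalMaxAt x < f x) := by
  refine ⟨fun c f _ _ _ hθ hf => AC.evalMaxAt_le_of_computes hθ hf, ?_⟩
  refine ⟨AC.twoThreeOne, AC.twoThreeOne.evalAt, AC.twoThreeOne_decomposable,
    AC.twoThreeOne_smooth, AC.twoThreeOne_vars, AC.twoThreeOne_params_nonneg, fun _ => rfl,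
    AC.not_deterministic_twoThreeOne, fun _ => true, ?_⟩
  beta_reduce
  rw [AC.twoThreeOne_evalMaxAt_true, AC.twoThreeOne_evalAt_true]
  norm_num

/-- For a decomposable and smooth circuit computing a factor `f`, the maximizer
circuit's value at any full instantiation is at most `f(x)`; and equality can fail
without determinism: the circuit `2λ_x + 3λ_x + λ_¬x` computes `f(x) = 5` but its
maximizer evaluates to `3 < 5`. -/
theorem stmt18 {ι α : Type} [Fintype ι] [DecidableEq ι] [Fintype α] [DecidableEq α] :
    (∀ (c : AC ι α) (f : (ι → α) → ℝ), c.Decomposable → c.Smooth →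
      c.vars = Finset.univ → (∀ θ ∈ c.params, 0 ≤ θ) → c.Computes f →
      ∀ x : ι → α, c.evalMaxAt x ≤ f x) ∧
    (∃ (c : AC (Fin 1) Bool) (f : (Fin 1 → Bool) → ℝ),
      c.Decomposable ∧ c.Smooth ∧ c.vars = Finset.univ ∧
      (∀ θ ∈ c.params, 0 ≤ θ) ∧ c.Computes f ∧ ¬ c.Deterministic ∧
      ∃ x : Fin 1 → Bool, c.evalMaxAt x < f x) :=
  stmt18_general
end
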